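/- arXiv:cs/0604001 — 2 statements merged into one kernel-verified Lean document; each statement's English description precedes it below -/
import Mathlib

section
/- Suppose a family S of continuous real-valued functions on a Hilbert space H has the universal approximation property on compacts (i.e., for every compact K ⊆ H, S restricted to K is uniformly dense in C(K, ℝ)), and suppose (Π_p) are orthogonal projections onto nested finite-dimensional subspaces with ‖Π_p g − g‖ → 0 for all g ∈ H, and that S is closed under precomposition with each Π_p. Then the family {F ∘ Π_p : F ∈ S, p ∈ ℕ} is uniformly dense in C(K, ℝ) for every compact K ⊆ H. -/
/-!
The projections `Π p` are all 1-Lipschitz, so by Ascoli their pointwise convergence to the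
identity upgrades to convergence in `C(H, H)` for the compact-open topology. Extending `f` by
Tietze to a continuous `f'` on `H`, postcomposition gives `f' ∘ Π p → f'` uniformly on `K`. Fix
`p` with `|f' ∘ Π p - f'| < ε / 2` on `K`, then `F ∈ S` with `|F - f'| < ε / 2` on the compact
set `K ∪ Π p '' K`.
-/

open Filter Topology Set

universe u v

theorem EquicontinuousOn.tendstoUniformlyOn_of_tendsto {ι X α : Type*} [TopologicalSpace X]
    [UniformSpace α] {F : ι → X → α} {f : X → α} {l : Filter ι} {K : Set X} (hK : IsCompact K)
    (hF : EquicontinuousOn F K) (h : ∀ x ∈ K, Tendsto (fun i => F i x) l (𝓝 (f x))) :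
    TendstoUniformlyOn F f l K := by
  have hpi : Tendsto ((⋃₀ {K}).domRestrict ∘ F) l (𝓝 ((⋃₀ {K}).domRestrict f)) := by
    rw [sUnion_singleton]
    exact tendsto_pi_nhds.2 fun x => h x x.2
  have := (EquicontinuousOn.tendsto_uniformOnFun_iff_pi' (by simpa) (by simpa) l f).2 hpi
  exact UniformOnFun.tendsto_iff_tendstoUniformlyOn.1 this K rfl

theorem ContinuousMap.tendsto_of_equicontinuous_of_tendsto {ι X α : Type*} [TopologicalSpace X]
    [UniformSpace α] {F : ι → C(X, α)} {f : C(X, α)} {l : Filter ι}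
    (hF : Equicontinuous fun i => ⇑(F i)) (h : ∀ x, Tendsto (fun i => F i x) l (𝓝 (f x))) :
    Tendsto F l (𝓝 f) :=
  tendsto_iff_forall_isCompact_tendstoUniformlyOn.2 fun K hK =>
    (hF.equicontinuousOn K).tendstoUniformlyOn_of_tendsto hK fun x _ => h x

theorem Submodule.tendsto_starProjection_continuousMap {𝕜 E ι : Type*} [RCLike 𝕜]
    [NormedAddCommGroup E] [InnerProductSpace 𝕜 E] {l : Filter ι} {V : ι → Submodule 𝕜 E}
    [∀ i, (V i).HasOrthogonalProjection]
    (h : ∀ x, Tendsto (fun i => (V i).starProjection x) l (𝓝 x)) :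
    Tendsto (fun i => ((V i).starProjection : C(E, E))) l (𝓝 (ContinuousMap.id E)) :=
  ContinuousMap.tendsto_of_equicontinuous_of_tendsto
    (LipschitzWith.uniformEquicontinuous _ 1 fun i =>
      (V i).lipschitzWith_starProjection).equicontinuous h

theorem ContinuousOn.exists_continuousMap_eqOn {X : Type u} {Y : Type v} [TopologicalSpace X]
    [NormalSpace X] [TopologicalSpace Y] [TietzeExtension.{u, v} Y] {f : X → Y} {s : Set X}
    (hs : IsClosed s) (hf : ContinuousOn f s) : ∃ g : C(X, Y), EqOn g f s := by
  obtain ⟨g, hg⟩ := (ContinuousMap.mk _ hf.domRestrict).exists_restrict_eq hs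
  exact ⟨g, fun x hx => congr($hg ⟨x, hx⟩)⟩

theorem stmt_6_general {H : Type*} [NormedAddCommGroup H] [InnerProductSpace ℝ H]
    (S : Set (H → ℝ))
    (hSuniv : ∀ K : Set H, IsCompact K → ∀ f : H → ℝ, ContinuousOn f K →
      ∀ ε > (0 : ℝ), ∃ F ∈ S, ∀ g ∈ K, |F g - f g| < ε)
    (V : ℕ → Submodule ℝ H) [∀ p, FiniteDimensional ℝ (V p)]
    (hpt : ∀ g : H, Filter.Tendsto
      (fun p => ‖(Submodule.orthogonalProjectionOnto (V p) g : H) - g‖) Filter.atTop (nhds 0)) :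
    ∀ K : Set H, IsCompact K → ∀ f : H → ℝ, ContinuousOn f K → ∀ ε > (0 : ℝ),
      ∃ F ∈ S, ∃ p : ℕ, ∀ g ∈ K,
        |F (Submodule.orthogonalProjectionOnto (V p) g : H) - f g| < ε := by
  intro K hK f hf ε hε
  obtain ⟨f', hf'⟩ := hf.exists_continuousMap_eqOn hK.isClosed
  have hP : Tendsto (fun p => ((V p).starProjection : C(H, H))) atTop (𝓝 (ContinuousMap.id H)) :=
    Submodule.tendsto_starProjection_continuousMap fun g =>
      tendsto_iff_norm_sub_tendsto_zero.2 (hpt g)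
  have hf'P : TendstoUniformlyOn (fun p g => f' ((V p).starProjection g)) f' atTop K :=
    ContinuousMap.tendsto_iff_forall_isCompact_tendstoUniformlyOn.1
      (((ContinuousMap.continuous_postcomp f').tendsto _).comp hP) K hK
  obtain ⟨p, hp⟩ := (Metric.tendstoUniformlyOn_iff.1 hf'P (ε / 2) (half_pos hε)).exists
  obtain ⟨F, hFS, hF⟩ := hSuniv _ (hK.union (hK.image (V p).starProjection.continuous)) f'
    f'.continuous.continuousOn (ε / 2) (half_pos hε)
  refine ⟨F, hFS, p, fun g hg => ?_⟩
  have hFg := hF _ (Or.inr (mem_image_of_mem _ hg))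
  have hpg := hp g hg
  rw [Real.dist_eq, hf' hg] at hpg
  rw [Submodule.starProjection_apply] at hFg hpg
  set x : H := ((V p).orthogonalProjectionOnto g : H)
  calc |F x - f g| ≤ |F x - f' x| + |f g - f' x| := by
        rw [abs_sub_comm (f g)]; exact abs_sub_le _ _ _
    _ < ε := by linarith

/-- If a family `S` of continuous real-valued functions on a Hilbert space has the
universal approximation property on compacts, `(Π p)` are orthogonal projections onto
nested finite-dimensional subspaces converging pointwise to the identity, and `S` is
closed under precomposition with each `Π p`, then the family `{F ∘ Π p}` is uniformly
dense in `C(K, ℝ)` for every compact `K`. -/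
theorem stmt_6 {H : Type*} [NormedAddCommGroup H] [InnerProductSpace ℝ H] [CompleteSpace H]
    (S : Set (H → ℝ)) (hScont : ∀ F ∈ S, Continuous F)
    (hSuniv : ∀ K : Set H, IsCompact K → ∀ f : H → ℝ, ContinuousOn f K →
      ∀ ε > (0 : ℝ), ∃ F ∈ S, ∀ g ∈ K, |F g - f g| < ε)
    (V : ℕ → Submodule ℝ H) [∀ p, FiniteDimensional ℝ (V p)]
    (hVmono : ∀ p, V p ≤ V (p + 1))
    (hpt : ∀ g : H, Filter.Tendsto
      (fun p => ‖(Submodule.orthogonalProjectionOnto (V p) g : H) - g‖) Filter.atTop (nhds 0))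
    (hScomp : ∀ F ∈ S, ∀ p : ℕ,
      (fun g => F (Submodule.orthogonalProjectionOnto (V p) g : H)) ∈ S) :
    ∀ K : Set H, IsCompact K → ∀ f : H → ℝ, ContinuousOn f K → ∀ ε > (0 : ℝ),
      ∃ F ∈ S, ∃ p : ℕ, ∀ g ∈ K,
        |F (Submodule.orthogonalProjectionOnto (V p) g : H) - f g| < ε :=
  stmt_6_general S hSuniv V hpt
end

section
/- Let Y ∈ L² and G_p = π_p(G). Define C_p* = inf over measurable f : ℝ^p → ℝ of E[(f(G_p) − Y)²]^{1/2} and C* = inf over measurable h : H → ℝ of E[(h(G) − Y)²]^{1/2}. Then lim_{p→∞} C_p* = C*. -/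
open MeasureTheory
open scoped RealInnerProductSpace ENNReal

/-!
`C_p*` is antitone in `p` and bounded below by `C*`, since a function of `π_p(G)` is a function
of `G`. Conversely, let `h(G) - Y ∈ L²`. Approximate `h` in `L²` of the law of `G` by a bounded
continuous `c`. The partial sums `P_p x = ∑_{k<p} ⟪x, φ_k⟫ φ_k` converge to `x`, so
`c ∘ P_p → c` pointwise and boundedly, hence in `L²`; and `c ∘ P_p` is a function of `π_p`.
Thus `C_p* ≤ ‖h(G) - Y‖₂ + ε` for large `p`.
-/

/-- The best root mean square error for predicting `Y` from the first `p` coordinates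
`π_p(G) = (⟨G,φ_1⟩,…,⟨G,φ_p⟩)` of `G`. -/
noncomputable def bestCoordError {Ω : Type*} [MeasurableSpace Ω] (μ : Measure Ω)
    {H : Type*} [NormedAddCommGroup H] [InnerProductSpace ℝ H] [CompleteSpace H]
    (φ : HilbertBasis ℕ ℝ H) (G : Ω → H) (Y : Ω → ℝ) (p : ℕ) : ℝ≥0∞ :=
  sInf { c : ℝ≥0∞ | ∃ f : (Fin p → ℝ) → ℝ, Measurable f ∧
    c = (∫⁻ ω, ENNReal.ofReal ((f (fun k : Fin p => ⟪G ω, (φ k : H)⟫) - Y ω) ^ 2) ∂μ)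
          ^ (1 / 2 : ℝ) }

/-- The best root mean square error for predicting `Y` from `G` itself. -/
noncomputable def bestError {Ω : Type*} [MeasurableSpace Ω] (μ : Measure Ω)
    {H : Type*} [MeasurableSpace H] (G : Ω → H) (Y : Ω → ℝ) : ℝ≥0∞ :=
  sInf { c : ℝ≥0∞ | ∃ h : H → ℝ, Measurable h ∧
    c = (∫⁻ ω, ENNReal.ofReal ((h (G ω) - Y ω) ^ 2) ∂μ) ^ (1 / 2 : ℝ) }

open Filter Topology

lemma eLpNorm_two_eq_lintegral_sq {Ω : Type*} [MeasurableSpace Ω] (μ : Measure Ω) (u : Ω → ℝ) :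
    eLpNorm u 2 μ = (∫⁻ ω, ENNReal.ofReal (u ω ^ 2) ∂μ) ^ (1 / 2 : ℝ) := by
  rw [eLpNorm_eq_lintegral_rpow_enorm_toReal two_ne_zero ENNReal.ofNat_ne_top]
  simp [← ofReal_norm, ← ENNReal.ofReal_pow (abs_nonneg _)]

theorem tendsto_eLpNorm_sub_of_tendsto_of_norm_le {α β : Type*} [MeasurableSpace α]
    {μ : Measure α} [IsFiniteMeasure μ] [NormedAddCommGroup β] {q : ℝ≥0∞} (hq1 : 1 ≤ q)
    (hq : q ≠ ∞) {f : ℕ → α → β} {g : α → β} (hf : ∀ n, AEStronglyMeasurable (f n) μ)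
    (hg : AEStronglyMeasurable g μ) {C : ℝ} (hC : ∀ n x, ‖f n x‖ ≤ C)
    (hfg : ∀ᵐ x ∂μ, Tendsto (fun n => f n x) atTop (𝓝 (g x))) :
    Tendsto (fun n => eLpNorm (f n - g) q μ) atTop (𝓝 0) := by
  have hgC : ∀ᵐ x ∂μ, ‖g x‖ ≤ C := by
    filter_upwards [hfg] with x hx
    exact le_of_tendsto' hx.norm fun n => hC n x
  refine tendsto_Lp_finite_of_tendsto_ae hq1 hq hf (MemLp.of_bound hg C hgC) ?_ hfg
  refine unifIntegrable_of hq1 hq hf fun ε hε => ⟨Real.toNNReal C + 1, fun n => ?_⟩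
  have hempty : { x | Real.toNNReal C + 1 ≤ ‖f n x‖₊ } = ∅ := by
    ext x
    simp only [Set.mem_ofPred_eq, Set.mem_empty_iff_false, iff_false, not_le]
    rw [← NNReal.coe_lt_coe, coe_nnnorm, NNReal.coe_add, NNReal.coe_one]
    exact (hC n x).trans_lt ((Real.le_coe_toNNReal C).trans_lt (lt_add_one _))
  simp [hempty]

namespace HilbertBasis

variable {H : Type*} [NormedAddCommGroup H] [InnerProductSpace ℝ H] (b : HilbertBasis ℕ ℝ H)

theorem tendsto_sum_range_inner_smul (x : H) :
    Tendsto (fun p => ∑ k ∈ Finset.range p, ⟪x, b k⟫ • b k) atTop (𝓝 x) := by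
  simpa only [b.repr_apply_apply, real_inner_comm] using (b.hasSum_repr x).tendsto_sum_nat

theorem exists_measurable_eLpNorm_comp_coords_sub_le [MeasurableSpace H] [BorelSpace H]
    (ν : Measure H) [IsFiniteMeasure ν] {q : ℝ≥0∞} (hq1 : 1 ≤ q) (hq : q ≠ ∞) {h : H → ℝ}
    (hh : MemLp h q ν) {ε : ℝ≥0∞} (hε : ε ≠ 0) :
    ∃ p, ∃ f : (Fin p → ℝ) → ℝ, Measurable f ∧
      eLpNorm (fun x => f (fun k : Fin p => ⟪x, b k⟫) - h x) q ν ≤ ε := by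
  have hε2 : ε / 2 ≠ 0 := ENNReal.div_ne_zero.2 ⟨hε, ENNReal.ofNat_ne_top⟩
  obtain ⟨c, hc, -⟩ := hh.exists_boundedContinuous_eLpNorm_sub_le hq hε2
  set P : ℕ → H → H := fun p x => ∑ k ∈ Finset.range p, ⟪x, b k⟫ • b k
  have hP : ∀ p, Continuous (P p) := fun p =>
    continuous_finsetSum _ fun k _ => (continuous_id.inner continuous_const).smul continuous_const
  have hcP : Tendsto (fun p => eLpNorm (⇑c ∘ P p - ⇑c) q ν) atTop (𝓝 0) :=
    tendsto_eLpNorm_sub_of_tendsto_of_norm_le hq1 hq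
      (fun p => (c.continuous.comp (hP p)).aestronglyMeasurable) c.continuous.aestronglyMeasurable
      (fun p x => c.norm_coe_le_norm (P p x))
      (ae_of_all _ fun x => (c.continuous.tendsto x).comp (b.tendsto_sum_range_inner_smul x))
  obtain ⟨p, hp⟩ := (hcP.eventually (ge_mem_nhds (pos_iff_ne_zero.2 hε2))).exists
  let synth : (Fin p → ℝ) → H := fun v => ∑ k : Fin p, v k • b k
  have hsynth : Continuous synth :=
    continuous_finsetSum _ fun k _ => (continuous_apply k).smul continuous_const
  refine ⟨p, c ∘ synth, c.continuous.measurable.comp hsynth.measurable, ?_⟩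
  have hcoords : (fun x => (c ∘ synth) (fun k : Fin p => ⟪x, b k⟫) - h x)
      = (⇑c ∘ P p - ⇑c) + -(h - ⇑c) := by
    ext x
    simp only [Function.comp_apply, Pi.add_apply, Pi.sub_apply, Pi.neg_apply, synth, P,
      Fin.sum_univ_eq_sum_range (fun k => ⟪x, b k⟫ • b k) p]
    ring
  calc eLpNorm (fun x => (c ∘ synth) (fun k : Fin p => ⟪x, b k⟫) - h x) q ν
      ≤ eLpNorm (⇑c ∘ P p - ⇑c) q ν + eLpNorm (-(h - ⇑c)) q ν := by
        rw [hcoords]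
        refine eLpNorm_add_le ?_ ?_ hq1
        · exact ((c.continuous.comp (hP p)).sub c.continuous).aestronglyMeasurable
        · exact (hh.1.sub c.continuous.aestronglyMeasurable).neg
    _ ≤ ε / 2 + ε / 2 := by rw [eLpNorm_neg]; gcongr
    _ = ε := ENNReal.add_halves ε

end HilbertBasis

section BestError

variable {Ω : Type*} [MeasurableSpace Ω] (μ : Measure Ω)
  {H : Type*} [NormedAddCommGroup H] [InnerProductSpace ℝ H] [CompleteSpace H]
  (φ : HilbertBasis ℕ ℝ H) (G : Ω → H) (Y : Ω → ℝ)

theorem bestCoordError_le_eLpNorm {p : ℕ} {f : (Fin p → ℝ) → ℝ} (hf : Measurable f) :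
    bestCoordError μ φ G Y p ≤ eLpNorm (fun ω => f (fun k : Fin p => ⟪G ω, φ k⟫) - Y ω) 2 μ :=
  sInf_le ⟨f, hf, eLpNorm_two_eq_lintegral_sq μ _⟩

theorem bestCoordError_antitone : Antitone (bestCoordError μ φ G Y) := by
  intro p q hpq
  refine le_sInf ?_
  rintro _ ⟨f, hf, rfl⟩
  rw [← eLpNorm_two_eq_lintegral_sq]
  exact bestCoordError_le_eLpNorm μ φ G Y (f := fun x => f fun k => x (Fin.castLE hpq k))
    (hf.comp (measurable_pi_lambda _ fun k => measurable_pi_apply _))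

theorem bestError_le_bestCoordError [MeasurableSpace H] [BorelSpace H] (p : ℕ) :
    bestError μ G Y ≤ bestCoordError μ φ G Y p := by
  refine le_sInf ?_
  rintro _ ⟨f, hf, rfl⟩
  exact sInf_le ⟨fun x => f (fun k : Fin p => ⟪x, φ k⟫),
    hf.comp (measurable_pi_lambda _ fun k => (continuous_id.inner continuous_const).measurable),
    rfl⟩

theorem iInf_bestCoordError_le_eLpNorm [IsFiniteMeasure μ] [MeasurableSpace H] [BorelSpace H]
    (hG : Measurable G) (hY : MemLp Y 2 μ) {h : H → ℝ} (hh : Measurable h) :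
    ⨅ p, bestCoordError μ φ G Y p ≤ eLpNorm (fun ω => h (G ω) - Y ω) 2 μ := by
  set B := eLpNorm (fun ω => h (G ω) - Y ω) 2 μ
  obtain hB | hB := eq_or_ne B ∞
  · exact hB ▸ le_top
  have hhY : MemLp (fun ω => h (G ω) - Y ω) 2 μ :=
    ⟨(hh.comp hG).aestronglyMeasurable.sub hY.1, hB.lt_top⟩
  have hhG : MemLp h 2 (μ.map G) := by
    rw [memLp_map_measure_iff hh.aestronglyMeasurable hG.aemeasurable]
    convert hhY.add hY using 1
    ext ω
    simp
  refine ENNReal.le_of_forall_pos_le_add fun ε hε _ => ?_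
  obtain ⟨p, f, hf, hfh⟩ := φ.exists_measurable_eLpNorm_comp_coords_sub_le (μ.map G) one_le_two
    ENNReal.ofNat_ne_top hhG (ENNReal.coe_ne_zero.2 hε.ne')
  have hfG : Measurable fun x : H => f fun k : Fin p => ⟪x, φ k⟫ :=
    hf.comp (measurable_pi_lambda _ fun k => (continuous_id.inner continuous_const).measurable)
  rw [eLpNorm_map_measure (g := fun x => (f fun k : Fin p => ⟪x, φ k⟫) - h x)
    (hfG.sub hh).aestronglyMeasurable hG.aemeasurable] at hfh
  have hsplit : (fun ω => f (fun k : Fin p => ⟪G ω, φ k⟫) - Y ω)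
      = (fun ω => f (fun k : Fin p => ⟪G ω, φ k⟫) - h (G ω)) + fun ω => h (G ω) - Y ω := by
    ext ω
    simp
  calc ⨅ q, bestCoordError μ φ G Y q
      ≤ eLpNorm (fun ω => f (fun k : Fin p => ⟪G ω, φ k⟫) - Y ω) 2 μ :=
        (iInf_le _ p).trans (bestCoordError_le_eLpNorm μ φ G Y hf)
    _ ≤ eLpNorm (fun ω => f (fun k : Fin p => ⟪G ω, φ k⟫) - h (G ω)) 2 μ + B := by
        rw [hsplit]
        exact eLpNorm_add_le ((hfG.comp hG).sub (hh.comp hG)).aestronglyMeasurable hhY.1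
          one_le_two
    _ ≤ ε + B := add_le_add_left hfh B
    _ = B + ε := add_comm _ _

end BestError

theorem stmt_12_general {Ω : Type*} [m0 : MeasurableSpace Ω] (μ : Measure Ω) [IsProbabilityMeasure μ]
    {H : Type*} [NormedAddCommGroup H] [InnerProductSpace ℝ H] [CompleteSpace H]
    [MeasurableSpace H] [BorelSpace H]
    (φ : HilbertBasis ℕ ℝ H) (G : Ω → H) (hG : Measurable G)
    (Y : Ω → ℝ) (hY : MemLp Y 2 μ) :
    Filter.Tendsto (fun p => bestCoordError μ φ G Y p) Filter.atTop
      (nhds (bestError μ G Y)) := by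
  have hlim : ⨅ p, bestCoordError μ φ G Y p = bestError μ G Y := by
    refine le_antisymm (le_sInf ?_) (le_iInf (bestError_le_bestCoordError μ φ G Y))
    rintro _ ⟨h, hh, rfl⟩
    rw [← eLpNorm_two_eq_lintegral_sq]
    exact iInf_bestCoordError_le_eLpNorm μ φ G Y hG hY hh
  exact hlim ▸ tendsto_atTop_iInf (bestCoordError_antitone μ φ G Y)

/-- `C_p* → C*` as `p → ∞`: the best root mean square error achievable from the first
`p` coordinates of `G` converges to the best error achievable from `G`. -/
theorem stmt_12 {Ω : Type*} [m0 : MeasurableSpace Ω] (μ : Measure Ω) [IsProbabilityMeasure μ]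
    {H : Type*} [NormedAddCommGroup H] [InnerProductSpace ℝ H] [CompleteSpace H]
    [SecondCountableTopology H] [MeasurableSpace H] [BorelSpace H]
    (φ : HilbertBasis ℕ ℝ H) (G : Ω → H) (hG : Measurable G)
    (Y : Ω → ℝ) (hY : MemLp Y 2 μ) :
    Filter.Tendsto (fun p => bestCoordError μ φ G Y p) Filter.atTop
      (nhds (bestError μ G Y)) :=
  stmt_12_general (m0 := m0) μ φ G hG Y hY
end
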